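/- arXiv:adap-org/9309001 — 3 statements merged into one kernel-verified Lean document; each statement's English description precedes it below -/
import Mathlib

section
/- Let $a, b, c \ge 0$ with $a + b + c = 1$ and $a = c \neq 0$. Define $p_0 = a$ and $p_{d+1} = a + b p_d + c p_d^2$. Then for every natural number $d \ge 1$, $p_d \ge 1 - 1/(a d)$. -/
/-! In terms of `t_d = a (1 - p_d)` the recurrence at `a = c` (so `b = 1 - 2a`) becomes the
logistic map `t_{d+1} = t_d (1 - t_d)`, and every orbit of that map satisfies `d t_d ≤ 1`:
with `s = d t_d ≤ 1` and `t = t_d ≤ 1` one has `(d + 1) t (1 - t) - 1 = (s - 1)(1 - t) - t² ≤ 0`. -/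

theorem mul_one_sub_le_quarter (t : ℝ) : t * (1 - t) ≤ 1 / 4 := by
  nlinarith [sq_nonneg (t - 1 / 2)]

theorem add_one_mul_mul_one_sub_le_one {x t : ℝ} (ht : t ≤ 1) (hx : x * t ≤ 1) :
    (x + 1) * (t * (1 - t)) ≤ 1 := by
  nlinarith [mul_nonneg (sub_nonneg.2 hx) (sub_nonneg.2 ht), sq_nonneg t]

theorem logistic_orbit_le_one {u : ℕ → ℝ} (hu : ∀ n, u (n + 1) = u n * (1 - u n))
    (h0 : u 0 ≤ 1) : ∀ n, u n ≤ 1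
  | 0 => h0
  | n + 1 => by rw [hu n]; linarith [mul_one_sub_le_quarter (u n)]

theorem logistic_orbit_mul_le_one {u : ℕ → ℝ} (hu : ∀ n, u (n + 1) = u n * (1 - u n))
    (h0 : u 0 ≤ 1) : ∀ n : ℕ, n * u n ≤ 1
  | 0 => by simp
  | n + 1 => by
    push_cast
    rw [hu n]
    exact add_one_mul_mul_one_sub_le_one (logistic_orbit_le_one hu h0 n)
      (logistic_orbit_mul_le_one hu h0 n)

theorem stmt0_general (a b c : ℝ) (ha : 0 ≤ a)
    (hsum : a + b + c = 1) (hac : a = c) (hane : a ≠ 0)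
    (p : ℕ → ℝ) (hp0 : p 0 = a)
    (hprec : ∀ d : ℕ, p (d + 1) = a + b * p d + c * (p d) ^ 2) :
    ∀ d : ℕ, 1 ≤ d → 1 - 1 / (a * d) ≤ p d := by
  intro d hd
  have hb_eq : b = 1 - 2 * a := by linarith
  have hlogistic : ∀ n, a * (1 - p (n + 1)) = a * (1 - p n) * (1 - a * (1 - p n)) := by
    intro n
    rw [hprec n, ← hac, hb_eq]
    ring
  have h0 : a * (1 - p 0) ≤ 1 := by
    rw [hp0]
    linarith [mul_one_sub_le_quarter a]
  have hbound := logistic_orbit_mul_le_one (u := fun n => a * (1 - p n)) hlogistic h0 d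
  have had : 0 < a * d := mul_pos (ha.lt_of_ne' hane) (by exact_mod_cast hd)
  have : 1 - p d ≤ 1 / (a * d) := by
    rw [le_div_iff₀ had]
    linarith
  linarith

/-- At the threshold `a = c`, the forcing probability recurrence
`p 0 = a`, `p (d+1) = a + b * p d + c * (p d)^2` satisfies
`p d ≥ 1 - 1/(a d)` for all `d ≥ 1`. -/
theorem stmt0 (a b c : ℝ) (ha : 0 ≤ a) (hb : 0 ≤ b) (hc : 0 ≤ c)
    (hsum : a + b + c = 1) (hac : a = c) (hane : a ≠ 0)
    (p : ℕ → ℝ) (hp0 : p 0 = a)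
    (hprec : ∀ d : ℕ, p (d + 1) = a + b * p d + c * (p d) ^ 2) :
    ∀ d : ℕ, 1 ≤ d → 1 - 1 / (a * d) ≤ p d :=
  stmt0_general a b c ha hsum hac hane p hp0 hprec
end

section
/- Let $a, c > 0$ with $a + c \le 1$, $b = 1 - a - c$, and $a > c$. Define $p_0 = a$, $p_{d+1} = a + b p_d + c p_d^2$. Then $p_d \to 1$ as $d \to \infty$, and moreover the convergence is geometric: there exist constants $K$ and $\theta \in (0,1)$ such that $1 - p_d \le K \theta^d$ for all $d$. -/
/-- In the stable regime `a > c`, the forcing recurrence `p 0 = a`,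
`p (d+1) = a + b p_d + c p_d^2` (with `b = 1 - a - c`) converges to 1
geometrically fast. -/
theorem stmt3 (a c : ℝ) (ha : 0 < a) (hc : 0 < c) (hsum : a + c ≤ 1)
    (hgt : c < a) (b : ℝ) (hb : b = 1 - a - c)
    (p : ℕ → ℝ) (hp0 : p 0 = a)
    (hrec : ∀ d : ℕ, p (d + 1) = a + b * p d + c * (p d) ^ 2) :
    Filter.Tendsto p Filter.atTop (nhds 1) ∧
    ∃ K θ : ℝ, θ ∈ Set.Ioo (0 : ℝ) 1 ∧ ∀ d : ℕ, 1 - p d ≤ K * θ ^ d := by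
  set θ : ℝ := 1 - a + c with hθ
  have hb0 : 0 ≤ b := by nlinarith
  have hθ0 : 0 < θ := by nlinarith
  have hθ1 : θ < 1 := by nlinarith
  have key : ∀ d, 0 ≤ p d ∧ p d ≤ 1 ∧ 1 - p d ≤ θ ^ d := by
    intro d
    induction d with
    | zero =>
      rw [hp0]
      refine ⟨le_of_lt ha, by nlinarith, by simp; nlinarith⟩
    | succ n ih =>
      obtain ⟨h0, h1, h2⟩ := ih
      rw [hrec n]
      refine ⟨by nlinarith, by nlinarith [hb, mul_nonneg (sub_nonneg.2 h1) h0, mul_nonneg (sub_nonneg.2 h1) hc.le], ?_⟩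
      have : 1 - (a + b * p n + c * (p n) ^ 2) = (1 - p n) * (b + c * (1 + p n)) := by
        rw [hb]; ring
      rw [this, pow_succ]
      have hf : b + c * (1 + p n) ≤ θ := by nlinarith
      have hf0 : 0 ≤ b + c * (1 + p n) := by nlinarith
      calc (1 - p n) * (b + c * (1 + p n)) ≤ θ ^ n * θ := by
            apply mul_le_mul h2 hf hf0 (le_of_lt (pow_pos hθ0 n))
        _ = θ ^ n * θ := rfl
  constructor
  · have hlim : Filter.Tendsto (fun d : ℕ => 1 - θ ^ d) Filter.atTop (nhds 1) := by
      have : Filter.Tendsto (fun d : ℕ => θ ^ d) Filter.atTop (nhds 0) :=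
        tendsto_pow_atTop_nhds_zero_of_lt_one (le_of_lt hθ0) hθ1
      simpa using this.const_sub 1
    exact tendsto_of_tendsto_of_tendsto_of_le_of_le hlim tendsto_const_nhds
      (fun d => by have := (key d).2.2; linarith) (fun d => (key d).2.1)
  · exact ⟨1, θ, ⟨hθ0, hθ1⟩, fun d => by simpa using (key d).2.2⟩
end

section
/- Suppose for each $r \ge 0$, $\Pr(|S| = r) = \frac{2^r}{r!} e^{-2}$ (i.e., $|S|$ is Poisson with mean 2), and let $\rho = 1/2$. Define $\phi_{d+1} = 1 - \sum_{r \ge 0} \Pr(|S|=r) \cdot (1 - \rho \phi_d)^r = 1 - e^{-\phi_d}$ with $\phi_1 \le 1$. Then for all $d \ge 1$, $\phi_d \le 4/d$. -/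
/-!
Since `(1 - x/2)² ≤ exp (-x)` for `x ≤ 2`, the recursion gives `φ (d+1) ≤ g (φ d)` with
`g x = x - x²/4`. The map `g` is increasing on `(-∞, 2]` and `g (4/d) ≤ 4/(d+1)`, so the bound
`φ d ≤ 4/d` propagates by induction from `d = 2`, where `φ 2 ≤ φ 1 ≤ 1`.
-/

open Real

lemma one_sub_exp_neg_le {x : ℝ} (hx : x ≤ 2) :
    1 - exp (-x) ≤ x - x ^ 2 / 4 := by
  have hhalf : 1 - x / 2 ≤ exp (-x / 2) := by linarith [add_one_le_exp (-x / 2)]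
  have hsq : (1 - x / 2) ^ 2 ≤ exp (-x) := by
    rw [show -x = -x / 2 + -x / 2 by ring, exp_add]
    exact pow_two (1 - x / 2) ▸ mul_self_le_mul_self (by linarith) hhalf
  nlinarith

lemma sub_sq_div_four_le_sub_sq_div_four {x y : ℝ} (hxy : x ≤ y) (hsum : x + y ≤ 4) :
    x - x ^ 2 / 4 ≤ y - y ^ 2 / 4 := by
  nlinarith [mul_nonneg (sub_nonneg.2 hxy) (sub_nonneg.2 hsum)]

lemma four_div_sub_sq_le {n : ℝ} (hn : 0 < n) : 4 / n - (4 / n) ^ 2 / 4 ≤ 4 / (n + 1) := by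
  rw [div_pow, show 4 / n - 4 ^ 2 / n ^ 2 / 4 = 4 * (n - 1) / n ^ 2 by field_simp,
    div_le_div_iff₀ (by positivity) (by positivity)]
  nlinarith

theorem le_four_div_of_le_sub_sq_div_four (u : ℕ → ℝ) (h1 : u 1 ≤ 1)
    (hstep : ∀ d, 1 ≤ d → u (d + 1) ≤ u d - u d ^ 2 / 4) :
    ∀ d : ℕ, 1 ≤ d → u d ≤ 4 / d := by
  have h2 : u 2 ≤ 4 / 2 := by nlinarith [hstep 1 le_rfl]
  intro d hd
  obtain rfl | hd2 := hd.eq_or_lt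
  · norm_num; linarith
  induction d, hd2 using Nat.le_induction with
  | base => exact_mod_cast h2
  | succ n hn ih =>
    have hn' : (2 : ℝ) ≤ n := by exact_mod_cast hn
    have hbound : 4 / (n : ℝ) ≤ 2 := by rw [div_le_iff₀ (by linarith)]; linarith
    calc u (n + 1) ≤ u n - u n ^ 2 / 4 := hstep n (by omega)
      _ ≤ 4 / n - (4 / n) ^ 2 / 4 :=
        sub_sq_div_four_le_sub_sq_div_four (ih (by omega)) (by linarith [ih (by omega)])
      _ ≤ 4 / (n + 1 : ℕ) := by push_cast; exact four_div_sub_sq_le (by linarith)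

theorem stmt9_general (φ : ℕ → ℝ) (hφ1 : φ 1 ≤ 1)
    (hrec : ∀ d : ℕ, 1 ≤ d → φ (d + 1) = 1 - Real.exp (-φ d)) :
    ∀ d : ℕ, 1 ≤ d → φ d ≤ 4 / d := by
  have hle_one : ∀ d, 1 ≤ d → φ d ≤ 1 := by
    intro d hd
    induction d, hd using Nat.le_induction with
    | base => exact hφ1
    | succ n hn _ => rw [hrec n hn]; linarith [exp_pos (-φ n)]
  refine le_four_div_of_le_sub_sq_div_four φ hφ1 fun d hd ↦ ?_
  rw [hrec d hd]
  exact one_sub_exp_neg_le (by linarith [hle_one d hd])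

/-- Branching-process estimate: if `φ 1 ∈ [0,1]` and `φ (d+1) = 1 - exp (-φ d)`
for `d ≥ 1`, then `φ d ≤ 4/d` for all `d ≥ 1`. -/
theorem stmt9 (φ : ℕ → ℝ) (hφ0 : 0 ≤ φ 1) (hφ1 : φ 1 ≤ 1)
    (hrec : ∀ d : ℕ, 1 ≤ d → φ (d + 1) = 1 - Real.exp (-φ d)) :
    ∀ d : ℕ, 1 ≤ d → φ d ≤ 4 / d :=
  stmt9_general φ hφ1 hrec
end
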